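/- If G is a connected graph on n ≥ 3 vertices, then ρ₁(G)/ρ₂(G) ≤ (n−1)/(n−2), and equality holds if and only if G is the complete graph K_n. -/

import Mathlib

open Matrix SimpleGraph

/-- `x` is a (unit-normalizable) Pareto eigenvector of `A` associated with `lam`:
`x` is nonzero, entrywise nonnegative, `A x ≥ lam • x` entrywise, and
`lam = xᵀAx / xᵀx`. -/
def IsParetoEigenpair {n : ℕ} (A : Matrix (Fin n) (Fin n) ℝ) (lam : ℝ) (x : Fin n → ℝ) : Prop :=
  x ≠ 0 ∧ (∀ i, 0 ≤ x i) ∧ (∀ i, lam * x i ≤ A.mulVec x i) ∧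
    lam = (x ⬝ᵥ A.mulVec x) / (x ⬝ᵥ x)

/-- `lam` is a Pareto eigenvalue of `A`. -/
def IsParetoEigenvalue {n : ℕ} (A : Matrix (Fin n) (Fin n) ℝ) (lam : ℝ) : Prop :=
  ∃ x, IsParetoEigenpair A lam x

/-- The distance matrix of a graph on `Fin n`, as a real matrix. -/
noncomputable def distMatrix {n : ℕ} (G : SimpleGraph (Fin n)) : Matrix (Fin n) (Fin n) ℝ :=
  fun i j => (G.dist i j : ℝ)

/-- The set `Π(G)` of distance Pareto eigenvalues of `G`. -/
def distParetoSet {n : ℕ} (G : SimpleGraph (Fin n)) : Set ℝ :=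
  {lam | IsParetoEigenvalue (distMatrix G) lam}

/-- `a` is the `k`-th largest element of the (finite) set `S`. -/
def IsKthLargest (S : Set ℝ) (k : ℕ) (a : ℝ) : Prop :=
  a ∈ S ∧ {x ∈ S | a < x}.ncard = k - 1

/-- `a` is the `k`-th smallest element of the (finite) set `S`. -/
def IsKthSmallest (S : Set ℝ) (k : ℕ) (a : ℝ) : Prop :=
  a ∈ S ∧ {x ∈ S | x < a}.ncard = k - 1

/-- The star graph `S_n` on `n` vertices: vertex `0` is adjacent to all others. -/
def starGraph (n : ℕ) : SimpleGraph (Fin n) where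
  Adj i j := i ≠ j ∧ (i.val = 0 ∨ j.val = 0)
  symm := ⟨fun i j h => ⟨h.1.symm, h.2.symm⟩⟩
  loopless := ⟨fun i h => h.1 rfl⟩

/-- The graph `S_n⁺`: the star `S_n` plus one edge between the pendant vertices `1` and `2`. -/
def starPlusGraph (n : ℕ) : SimpleGraph (Fin n) where
  Adj i j := i ≠ j ∧
    ((i.val = 0 ∨ j.val = 0) ∨ (i.val = 1 ∧ j.val = 2) ∨ (i.val = 2 ∧ j.val = 1))
  symm := ⟨fun i j h => ⟨h.1.symm, by tauto⟩⟩
  loopless := ⟨fun i h => h.1 rfl⟩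

/-- The wheel graph `W_n` on `n` vertices: hub `0` joined to the cycle `1 - 2 - ⋯ - (n-1) - 1`. -/
def wheelGraph (n : ℕ) : SimpleGraph (Fin n) where
  Adj i j := i ≠ j ∧ (i.val = 0 ∨ j.val = 0 ∨
    i.val + 1 = j.val ∨ j.val + 1 = i.val ∨
    (i.val = 1 ∧ j.val = n - 1) ∨ (j.val = 1 ∧ i.val = n - 1))
  symm := ⟨fun i j h => ⟨h.1.symm, by tauto⟩⟩
  loopless := ⟨fun i h => h.1 rfl⟩

/-- `K₄ - e`: the complete graph on 4 vertices minus the edge `{0,1}`. -/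
def k4MinusE : SimpleGraph (Fin 4) where
  Adj i j := i ≠ j ∧ ¬((i.val = 0 ∧ j.val = 1) ∨ (i.val = 1 ∧ j.val = 0))
  symm := ⟨fun i j h => ⟨h.1.symm, by tauto⟩⟩
  loopless := ⟨fun i h => h.1 rfl⟩

/-- `C₃ * C₃`: two triangles `{0,1,2}` and `{0,3,4}` glued at the common vertex `0`. -/
def c3c3Graph : SimpleGraph (Fin 5) where
  Adj i j := i ≠ j ∧ (i.val = 0 ∨ j.val = 0 ∨
    (i.val ≤ 2 ∧ j.val ≤ 2) ∨ (3 ≤ i.val ∧ 3 ≤ j.val))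
  symm := ⟨fun i j h => ⟨h.1.symm, by tauto⟩⟩
  loopless := ⟨fun i h => h.1 rfl⟩

/-!
Let `μ₁` be the maximum of the Rayleigh quotient of the distance matrix `D`, attained at a
nonnegative unit vector `x`. Every Pareto eigenvalue is at most `μ₁` and `μ₁` is one of them,
so `ρ₁ = μ₁ ≥ n - 1`. Let `v` be a vertex where `x` is smallest, so that `n x_v² ≤ 1`. The
maximum `μ₂` of the Rayleigh quotient over vectors vanishing at `v` is again a Pareto
eigenvalue, strictly below `μ₁` because distances between distinct vertices are positive, hence
`μ₂ ≤ ρ₂`. Testing it on `x` with its `v`-coordinate deleted (and `D_vv = 0`) gives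
`μ₂ ≥ μ₁ (1 - 2x_v²) / (1 - x_v²) ≥ μ₁ (n - 2) / (n - 1)`.

In the equality case `x` is constant and the deleted vector is itself a maximiser, hence an
eigenvector on `{v}ᶜ`: all vertices are at the same distance `μ₁ - μ₂ = 1` from `v`, which
forces `μ₁ = n - 1`, so every row sum of `D` is `n - 1` and `G = K_n`. Conversely, a Pareto
eigenvector of `K_n` is constant on its support, so its eigenvalue is `|supp x| - 1`; hence
`ρ₁ = n - 1` and `ρ₂ = n - 2` for `K_n`.
-/

section Rayleigh

variable {ι : Type*} [Fintype ι] {A : Matrix ι ι ℝ} {S : Set ι} {μ : ℝ} {x : ι → ℝ}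

structure IsRayleighMaxOn (A : Matrix ι ι ℝ) (S : Set ι) (μ : ℝ) (x : ι → ℝ) : Prop where
  support_subset : x.support ⊆ S
  quadForm_eq : x ⬝ᵥ A *ᵥ x = μ * (x ⬝ᵥ x)
  quadForm_le : ∀ y : ι → ℝ, y.support ⊆ S → y ⬝ᵥ A *ᵥ y ≤ μ * (y ⬝ᵥ y)

lemma dotProduct_self_pos_of_ne_zero (hx : x ≠ 0) : 0 < x ⬝ᵥ x := by
  simpa using dotProduct_self_star_pos_iff.2 hx

lemma Matrix.IsSymm.dotProduct_mulVec_comm (hA : A.IsSymm) (x y : ι → ℝ) :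
    x ⬝ᵥ A *ᵥ y = y ⬝ᵥ A *ᵥ x := by
  rw [dotProduct_mulVec, ← mulVec_transpose, hA.eq, dotProduct_comm]

lemma quadForm_smul (A : Matrix ι ι ℝ) (c : ℝ) (y : ι → ℝ) :
    (c • y) ⬝ᵥ A *ᵥ (c • y) = c ^ 2 * (y ⬝ᵥ A *ᵥ y) := by
  simp only [mulVec_smul, smul_dotProduct, dotProduct_smul, smul_eq_mul]
  ring

lemma quadForm_le_quadForm_abs (hA : ∀ i j, 0 ≤ A i j) (x : ι → ℝ) :
    x ⬝ᵥ A *ᵥ x ≤ |x| ⬝ᵥ A *ᵥ |x| := by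
  simp only [dotProduct, mulVec, Finset.mul_sum]
  refine Finset.sum_le_sum fun i _ => Finset.sum_le_sum fun j _ => ?_
  calc x i * (A i j * x j) ≤ |x i * (A i j * x j)| := le_abs_self _
    _ = |x| i * (A i j * |x| j) := by simp [abs_mul, abs_of_nonneg (hA i j)]

lemma quadForm_le_mul_dotProduct_self {M : ℝ}
    (hM : ∀ z : ι → ℝ, z ⬝ᵥ z = 1 → z.support ⊆ S → z ⬝ᵥ A *ᵥ z ≤ M)
    {y : ι → ℝ} (hy : y.support ⊆ S) : y ⬝ᵥ A *ᵥ y ≤ M * (y ⬝ᵥ y) := by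
  rcases eq_or_ne y 0 with rfl | hy0
  · simp
  have hyy := dotProduct_self_pos_of_ne_zero hy0
  set r := √(y ⬝ᵥ y)
  have hr : r ^ 2 = y ⬝ᵥ y := Real.sq_sqrt hyy.le
  have hz := hM (r⁻¹ • y)
    (by rw [smul_dotProduct, dotProduct_smul, smul_eq_mul, smul_eq_mul, ← mul_assoc, ← sq,
      inv_pow, hr, inv_mul_cancel₀ hyy.ne'])
    ((Function.support_const_smul_subset _ _).trans hy)
  rw [quadForm_smul, inv_pow, hr, inv_mul_le_iff₀ hyy] at hz
  linarith

lemma exists_isRayleighMaxOn (hA : ∀ i j, 0 ≤ A i j) (hS : S.Nonempty) :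
    ∃ μ x, IsRayleighMaxOn A S μ x ∧ 0 ≤ x ∧ x ⬝ᵥ x = 1 := by
  classical
  set K : Set (ι → ℝ) := {x | x ⬝ᵥ x = 1} ∩ {x | x.support ⊆ S}
  have hK : IsCompact K := by
    refine isCompact_Icc (a := -1) (b := 1) |>.of_isClosed_subset ?_ ?_
    · refine (isClosed_eq (continuous_id.dotProduct continuous_id) continuous_const).inter ?_
      simp only [Function.support_subset_iff', Set.ofPred_forall]
      exact isClosed_iInter fun i => isClosed_iInter fun _ =>
        isClosed_eq (continuous_apply i) continuous_const
    · rintro x ⟨hx, -⟩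
      have hxi : ∀ i, |x i| ≤ 1 := fun i => by
        rw [← sq_le_one_iff_abs_le_one, ← hx, sq]
        exact Finset.single_le_sum (f := fun j => x j * x j) (fun j _ => mul_self_nonneg (x j))
          (Finset.mem_univ i)
      exact ⟨fun i => (abs_le.1 (hxi i)).1, fun i => (abs_le.1 (hxi i)).2⟩
  obtain ⟨i₀, hi₀⟩ := hS
  have hsingle : Pi.single i₀ 1 ∈ K :=
    ⟨by simp, Pi.support_single_subset.trans (Set.singleton_subset_iff.2 hi₀)⟩
  have hq : Continuous fun x : ι → ℝ => x ⬝ᵥ A *ᵥ x :=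
    continuous_id.dotProduct (continuous_const.matrix_mulVec continuous_id)
  obtain ⟨x₀, ⟨hx₀, hx₀S⟩, hmax⟩ := hK.exists_isMaxOn ⟨_, hsingle⟩ hq.continuousOn
  have habs : |x₀| ⬝ᵥ |x₀| = 1 := by
    rw [← hx₀]
    exact Finset.sum_congr rfl fun i _ => abs_mul_abs_self (x₀ i)
  refine ⟨_, |x₀|, ⟨fun i hi => hx₀S (by simpa using hi), by rw [habs, mul_one], fun y hy => ?_⟩,
    abs_nonneg x₀, habs⟩
  exact quadForm_le_mul_dotProduct_self
    (fun z hz hzS => (hmax ⟨hz, hzS⟩).trans (quadForm_le_quadForm_abs hA x₀)) hy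

lemma IsRayleighMaxOn.mulVec_apply [DecidableEq ι] (hA : A.IsSymm) (h : IsRayleighMaxOn A S μ x)
    {i : ι} (hi : i ∈ S) : (A *ᵥ x) i = μ * x i := by
  set e : ι → ℝ := Pi.single i 1
  have heAx : e ⬝ᵥ A *ᵥ x = (A *ᵥ x) i := by simp [e]
  have hxAe : x ⬝ᵥ A *ᵥ e = (A *ᵥ x) i := by rw [hA.dotProduct_mulVec_comm, heAx]
  have heAe : e ⬝ᵥ A *ᵥ e = A i i := by simp [e]
  -- `μ ‖y‖² - yᵀAy` is a nonnegative quadratic form on `S` vanishing at `x`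
  have hquad : ∀ t : ℝ, 0 ≤ (μ - A i i) * (t * t) + 2 * (μ * x i - (A *ᵥ x) i) * t + 0 := by
    intro t
    have hsupp : (x + t • e).support ⊆ S := by
      refine (Function.support_add _ _).trans (Set.union_subset h.support_subset ?_)
      exact (Function.support_const_smul_subset _ _).trans
        (Pi.support_single_subset.trans (Set.singleton_subset_iff.2 hi))
    have hle := h.quadForm_le _ hsupp
    simp only [mulVec_add, mulVec_smul, add_dotProduct, dotProduct_add, smul_dotProduct,
      dotProduct_smul, smul_eq_mul, heAx, hxAe, heAe, h.quadForm_eq] at hle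
    simp only [e, single_dotProduct, dotProduct_single, Pi.single_eq_same] at hle
    nlinarith
  have hdiscr := discrim_le_zero hquad
  rw [discrim] at hdiscr
  nlinarith [sq_nonneg (μ * x i - (A *ᵥ x) i)]

end Rayleigh

section Pareto

variable {n : ℕ} {A : Matrix (Fin n) (Fin n) ℝ} {S : Set (Fin n)} {μ lam : ℝ} {x : Fin n → ℝ}

lemma IsRayleighMaxOn.isParetoEigenpair (hA : A.IsSymm) (hA0 : ∀ i j, 0 ≤ A i j)
    (h : IsRayleighMaxOn A S μ x) (hx : 0 ≤ x) (hx0 : x ≠ 0) : IsParetoEigenpair A μ x := by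
  refine ⟨hx0, hx, fun i => ?_, ?_⟩
  · by_cases hi : i ∈ S
    · exact (h.mulVec_apply hA hi).ge
    · rw [Function.notMem_support.1 (fun h' => hi (h.support_subset h')), mul_zero]
      simp only [mulVec, dotProduct]
      exact Finset.sum_nonneg fun j _ => mul_nonneg (hA0 i j) (hx j)
  · rw [h.quadForm_eq, mul_div_cancel_right₀ _ (dotProduct_self_pos_of_ne_zero hx0).ne']

lemma IsRayleighMaxOn.le_of_isParetoEigenvalue (h : IsRayleighMaxOn A Set.univ μ x)
    (hlam : IsParetoEigenvalue A lam) : lam ≤ μ := by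
  obtain ⟨y, hy0, -, -, rfl⟩ := hlam
  rw [div_le_iff₀ (dotProduct_self_pos_of_ne_zero hy0)]
  exact h.quadForm_le y (Set.subset_univ _)

lemma IsParetoEigenpair.mulVec_apply (h : IsParetoEigenpair A lam x) {i : Fin n} (hi : x i ≠ 0) :
    (A *ᵥ x) i = lam * x i := by
  obtain ⟨hx0, hx, hle, hlam⟩ := h
  have hsum : ∑ j, x j * ((A *ᵥ x) j - lam * x j) = x ⬝ᵥ A *ᵥ x - lam * (x ⬝ᵥ x) := by
    simp only [dotProduct, mul_sub, Finset.sum_sub_distrib, Finset.mul_sum, mul_left_comm]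
  have hzero : x ⬝ᵥ A *ᵥ x - lam * (x ⬝ᵥ x) = 0 := by
    rw [hlam, div_mul_cancel₀ _ (dotProduct_self_pos_of_ne_zero hx0).ne', sub_self]
  rw [hzero] at hsum
  have hterm := (Finset.sum_eq_zero_iff_of_nonneg fun j _ =>
    mul_nonneg (hx j) (sub_nonneg.2 (hle j))).1 hsum i (Finset.mem_univ i)
  linarith [(mul_eq_zero.1 hterm).resolve_left hi]

lemma setOf_isParetoEigenvalue_finite (A : Matrix (Fin n) (Fin n) ℝ) :
    {lam | IsParetoEigenvalue A lam}.Finite := by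
  -- a Pareto eigenvalue is an eigenvalue of the principal submatrix on the support of its vector
  let P : Set (Fin n) → Matrix (Fin n) (Fin n) ℝ := fun s => diagonal (s.indicator 1)
  refine (Set.finite_iUnion fun s : Set (Fin n) =>
    Module.End.finite_hasEigenvalue (toLin' (P s * A * P s))).subset ?_
  rintro lam ⟨x, hx⟩
  refine Set.mem_iUnion.2 ⟨x.support, Module.End.hasEigenvalue_of_hasEigenvector
    ⟨Module.End.mem_eigenspace_iff.2 ?_, hx.1⟩⟩
  have hPx : P x.support *ᵥ x = x := by
    ext i
    by_cases hi : x i = 0 <;> simp [P, mulVec_diagonal, hi]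
  ext i
  rw [toLin'_apply, ← mulVec_mulVec, ← mulVec_mulVec, hPx, mulVec_diagonal]
  by_cases hi : x i = 0
  · simp [hi]
  · simp [hi, hx.mulVec_apply hi]

end Pareto

section KthLargest

variable {S : Set ℝ} {a b c : ℝ}

lemma IsKthLargest.le_of_one (hS : S.Finite) (ha : IsKthLargest S 1 a) (hc : c ∈ S) : c ≤ a := by
  by_contra! h
  have hempty := (Set.ncard_eq_zero (hS.subset fun x hx => hx.1)).1 ha.2
  exact hempty.subset ⟨hc, h⟩

lemma IsKthLargest.lt_of_two (hS : S.Finite) (ha : IsKthLargest S 1 a)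
    (hb : IsKthLargest S 2 b) : b < a := by
  obtain ⟨c, hc⟩ := Set.ncard_eq_one.1 hb.2
  have hcmem : c ∈ {x ∈ S | b < x} := hc ▸ rfl
  exact hcmem.2.trans_le (ha.le_of_one hS hcmem.1)

lemma IsKthLargest.le_of_two (hS : S.Finite) (ha : IsKthLargest S 1 a)
    (hb : IsKthLargest S 2 b) (hc : c ∈ S) (hca : c ≠ a) : c ≤ b := by
  obtain ⟨d, hd⟩ := Set.ncard_eq_one.1 hb.2
  by_contra! h
  have hc' : c ∈ {x ∈ S | b < x} := ⟨hc, h⟩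
  have ha' : a ∈ {x ∈ S | b < x} := ⟨ha.1, ha.lt_of_two hS hb⟩
  rw [hd] at hc' ha'
  exact hca (hc'.trans ha'.symm)

end KthLargest

section DistMatrix

variable {n : ℕ} {G : SimpleGraph (Fin n)}

lemma distMatrix_isSymm (G : SimpleGraph (Fin n)) : (distMatrix G).IsSymm :=
  IsSymm.ext fun i j => by simp [distMatrix, dist_comm]

lemma distMatrix_nonneg (i j : Fin n) : 0 ≤ distMatrix G i j := Nat.cast_nonneg _

lemma distMatrix_self (i : Fin n) : distMatrix G i i = 0 := by simp [distMatrix]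

lemma distMatrix_injective : Function.Injective (distMatrix (n := n)) := by
  intro G H h
  ext i j
  have hij := congr_fun (congr_fun h i) j
  simp only [distMatrix, Nat.cast_inj] at hij
  rw [← dist_eq_one_iff_adj, ← dist_eq_one_iff_adj, hij]

lemma distMatrix_top_apply (i j : Fin n) :
    distMatrix (⊤ : SimpleGraph (Fin n)) i j = if i = j then 0 else 1 := by
  split_ifs with h
  · exact h ▸ distMatrix_self i
  · simp [distMatrix, dist_eq_one_iff_adj.2 ((top_adj i j).2 h)]

lemma mulVec_distMatrix_top (x : Fin n → ℝ) (i : Fin n) :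
    (distMatrix (⊤ : SimpleGraph (Fin n)) *ᵥ x) i = ∑ j, x j - x i := by
  have hterm : ∀ j, distMatrix ⊤ i j * x j = x j - if i = j then x j else 0 := by
    intro j
    rw [distMatrix_top_apply]
    split_ifs <;> simp
  simp only [mulVec, dotProduct, hterm, Finset.sum_sub_distrib, Finset.sum_ite_eq,
    Finset.mem_univ, if_true]

lemma sum_distMatrix_top (i : Fin n) : ∑ j, distMatrix (⊤ : SimpleGraph (Fin n)) i j = n - 1 := by
  simpa [mulVec, dotProduct] using mulVec_distMatrix_top (fun _ => (1 : ℝ)) i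

lemma SimpleGraph.Connected.distMatrix_top_le (hG : G.Connected) (i j : Fin n) :
    distMatrix ⊤ i j ≤ distMatrix G i j := by
  rw [distMatrix_top_apply]
  split_ifs with h
  · exact distMatrix_nonneg i j
  · exact Nat.one_le_cast.2 (hG.pos_dist_of_ne h)

lemma SimpleGraph.Connected.distMatrix_pos (hG : G.Connected) {i j : Fin n} (hij : i ≠ j) :
    0 < distMatrix G i j :=
  zero_lt_one.trans_le (by simpa [distMatrix_top_apply, hij] using hG.distMatrix_top_le i j)

lemma SimpleGraph.Connected.sub_one_le_sum_distMatrix (hG : G.Connected) (i : Fin n) :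
    (n : ℝ) - 1 ≤ ∑ j, distMatrix G i j :=
  sum_distMatrix_top i ▸ Finset.sum_le_sum fun j _ => hG.distMatrix_top_le i j

lemma SimpleGraph.Connected.eq_top_of_sum_distMatrix_le (hG : G.Connected)
    (h : ∀ i, ∑ j, distMatrix G i j ≤ n - 1) : G = ⊤ := by
  refine distMatrix_injective (funext fun i => funext fun j => ?_)
  have hsum : ∑ j, distMatrix ⊤ i j = ∑ j, distMatrix G i j :=
    le_antisymm (Finset.sum_le_sum fun j _ => hG.distMatrix_top_le i j)
      ((h i).trans_eq (sum_distMatrix_top i).symm)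
  exact ((Finset.sum_eq_sum_iff_of_le fun j _ => hG.distMatrix_top_le i j).1 hsum j
    (Finset.mem_univ j)).symm

end DistMatrix

lemma exists_nat_of_mem_distParetoSet_top {n : ℕ} {lam : ℝ}
    (h : lam ∈ distParetoSet (⊤ : SimpleGraph (Fin n))) : ∃ k : ℕ, k ≤ n ∧ lam = k - 1 := by
  obtain ⟨x, hx⟩ := h
  set s := Finset.univ.filter fun i => x i ≠ 0
  have hσ : 0 < ∑ i, x i := by
    refine (Finset.sum_nonneg fun i _ => hx.2.1 i).lt_of_ne fun h0 => hx.1 (funext fun i => ?_)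
    exact (Finset.sum_eq_zero_iff_of_nonneg fun j _ => hx.2.1 j).1 h0.symm i (Finset.mem_univ i)
  have hsum : ∑ i ∈ s, (∑ j, x j - x i) = ∑ i ∈ s, lam * x i :=
    Finset.sum_congr rfl fun i hi => by
      rw [← mulVec_distMatrix_top, hx.mulVec_apply (Finset.mem_filter.1 hi).2]
  rw [Finset.sum_sub_distrib, ← Finset.mul_sum, Finset.sum_filter_ne_zero, Finset.sum_const,
    nsmul_eq_mul] at hsum
  refine ⟨s.card, (Finset.card_le_univ s).trans_eq (Fintype.card_fin n), ?_⟩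
  exact (mul_right_cancel₀ hσ.ne' (by linarith : (s.card - 1 : ℝ) * _ = lam * _)).symm

lemma isKthLargest_distParetoSet_top_le {n : ℕ} {ρ1 ρ2 : ℝ}
    (hρ1 : IsKthLargest (distParetoSet (⊤ : SimpleGraph (Fin n))) 1 ρ1)
    (hρ2 : IsKthLargest (distParetoSet (⊤ : SimpleGraph (Fin n))) 2 ρ2) :
    ρ1 ≤ n - 1 ∧ ρ2 ≤ n - 2 := by
  have h21 := hρ1.lt_of_two (setOf_isParetoEigenvalue_finite _) hρ2
  obtain ⟨k, hk, rfl⟩ := exists_nat_of_mem_distParetoSet_top hρ1.1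
  obtain ⟨l, -, rfl⟩ := exists_nat_of_mem_distParetoSet_top hρ2.1
  have hlk : l + 1 ≤ k := by exact_mod_cast (show (l : ℝ) < k by linarith)
  have hk' : (k : ℝ) ≤ n := by exact_mod_cast hk
  have hl' : (l : ℝ) + 1 ≤ n := by exact_mod_cast hlk.trans hk
  constructor <;> linarith

lemma support_sub_single_apply_subset {ι : Type*} [DecidableEq ι] (x : ι → ℝ) (v : ι) :
    (x - Pi.single v (x v)).support ⊆ {v}ᶜ := by
  rintro i hi rfl
  simp at hi

section Deletion

variable {ι : Type*} [Fintype ι] {A : Matrix ι ι ℝ} {μ₁ μ₂ : ℝ} {x y : ι → ℝ} {v : ι}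

lemma quadForm_sub_single [DecidableEq ι] (hA : A.IsSymm) (x : ι → ℝ) (v : ι) (c : ℝ) :
    (x - Pi.single v c) ⬝ᵥ A *ᵥ (x - Pi.single v c) =
      x ⬝ᵥ A *ᵥ x - 2 * c * (A *ᵥ x) v + c ^ 2 * A v v := by
  have hxAe : x ⬝ᵥ A *ᵥ Pi.single v c = c * (A *ᵥ x) v := by
    rw [hA.dotProduct_mulVec_comm, single_dotProduct]
  have hAe : (A *ᵥ Pi.single v c) v = A v v * c := by simp [mulVec, dotProduct_single]
  simp only [mulVec_sub, sub_dotProduct, dotProduct_sub]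
  rw [hxAe, single_dotProduct, single_dotProduct, hAe]
  ring

lemma dotProduct_sub_single_apply_self [DecidableEq ι] (x : ι → ℝ) (v : ι) :
    (x - Pi.single v (x v)) ⬝ᵥ (x - Pi.single v (x v)) = x ⬝ᵥ x - x v ^ 2 := by
  simp only [sub_dotProduct, dotProduct_sub]
  simp only [single_dotProduct, dotProduct_single, Pi.single_eq_same]
  ring

lemma IsRayleighMaxOn.quadForm_sub_single_apply [DecidableEq ι] (hA : A.IsSymm) (hv : A v v = 0)
    (h : IsRayleighMaxOn A Set.univ μ₁ x) :
    (x - Pi.single v (x v)) ⬝ᵥ A *ᵥ (x - Pi.single v (x v)) = μ₁ * (x ⬝ᵥ x - 2 * x v ^ 2) := by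
  rw [quadForm_sub_single hA, h.quadForm_eq, h.mulVec_apply hA (Set.mem_univ v), hv]
  ring

lemma IsRayleighMaxOn.lt_of_compl_singleton [DecidableEq ι] (hA : A.IsSymm)
    (hA0 : ∀ i j, 0 ≤ A i j) (hpos : ∀ j, j ≠ v → 0 < A v j)
    (h₁ : IsRayleighMaxOn A Set.univ μ₁ x) (h₂ : IsRayleighMaxOn A {v}ᶜ μ₂ y) (hy : 0 ≤ y)
    (hy0 : y ≠ 0) : μ₂ < μ₁ := by
  have hle : μ₂ ≤ μ₁ := by
    have := h₁.quadForm_le y (Set.subset_univ _)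
    rw [h₂.quadForm_eq] at this
    exact le_of_mul_le_mul_right this (dotProduct_self_pos_of_ne_zero hy0)
  refine hle.lt_of_ne fun heq => ?_
  -- otherwise `y` would be a global maximiser, hence an eigenvector, but `(A y) v > 0 = y v`
  have hglob : IsRayleighMaxOn A Set.univ μ₂ y :=
    ⟨Set.subset_univ _, h₂.quadForm_eq, heq ▸ h₁.quadForm_le⟩
  have hyv : y v = 0 := Function.notMem_support.1 fun h => h₂.support_subset h rfl
  obtain ⟨j, hj⟩ := Function.ne_iff.1 hy0
  have hjv : j ≠ v := by rintro rfl; exact hj hyv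
  have hpos' : 0 < (A *ᵥ y) v :=
    (mul_pos (hpos j hjv) ((hy j).lt_of_ne' hj)).trans_le <|
      Finset.single_le_sum (f := fun k => A v k * y k) (fun k _ => mul_nonneg (hA0 v k) (hy k))
        (Finset.mem_univ j)
  rw [hglob.mulVec_apply hA (Set.mem_univ v), hyv, mul_zero] at hpos'
  exact hpos'.false

lemma card_mul_sq_eq_sum (x : ι → ℝ) (v : ι) :
    Fintype.card ι * x v ^ 2 = ∑ _i : ι, x v * x v := by
  simp [sq]

lemma card_mul_sq_le_dotProduct_self (hx : 0 ≤ x) (hv : ∀ i, x v ≤ x i) :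
    Fintype.card ι * x v ^ 2 ≤ x ⬝ᵥ x :=
  (card_mul_sq_eq_sum x v).trans_le <|
    Finset.sum_le_sum fun i _ => mul_self_le_mul_self (hx v) (hv i)

lemma eq_of_card_mul_sq_eq_dotProduct_self (hx : 0 ≤ x) (hv : ∀ i, x v ≤ x i)
    (h : Fintype.card ι * x v ^ 2 = x ⬝ᵥ x) (i : ι) : x i = x v := by
  rw [card_mul_sq_eq_sum] at h
  have hi := (Finset.sum_eq_sum_iff_of_le fun i _ => mul_self_le_mul_self (hx v) (hv i)).1 h i
    (Finset.mem_univ i)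
  exact (mul_self_inj (hx i) (hx v)).1 hi.symm

end Deletion

section ConnectedGraph

variable {n : ℕ} {G : SimpleGraph (Fin n)} {μ₁ μ₂ : ℝ} {x y : Fin n → ℝ} {v : Fin n}

lemma SimpleGraph.Connected.sub_one_le_of_isRayleighMaxOn (hG : G.Connected) (hn : 0 < n)
    (h : IsRayleighMaxOn (distMatrix G) Set.univ μ₁ x) : (n : ℝ) - 1 ≤ μ₁ := by
  have hones := h.quadForm_le (fun _ => 1) (Set.subset_univ _)
  have hrows := Finset.sum_le_sum fun i (_ : i ∈ Finset.univ) => hG.sub_one_le_sum_distMatrix i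
  simp only [dotProduct, mulVec, mul_one, one_mul, Finset.sum_const, Finset.card_univ,
    Fintype.card_fin, nsmul_eq_mul] at hones hrows
  exact le_of_mul_le_mul_left (by linarith) (Nat.cast_pos.2 hn)

lemma SimpleGraph.Connected.eq_top_of_isRayleighMaxOn_const (hG : G.Connected) (hn : 2 ≤ n)
    {c : ℝ} (hc : c ≠ 0) (hx : ∀ i, x i = c)
    (h₁ : IsRayleighMaxOn (distMatrix G) Set.univ μ₁ x)
    (h₂ : IsRayleighMaxOn (distMatrix G) {v}ᶜ μ₂ (x - Pi.single v c))
    (hμ : μ₂ * (n - 1) = μ₁ * (n - 2)) : G = ⊤ := by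
  obtain rfl : x = fun _ => c := funext hx
  have hA := distMatrix_isSymm G
  have hrow : ∀ i, ∑ j, distMatrix G i j = μ₁ := fun i => by
    have := h₁.mulVec_apply hA (Set.mem_univ i)
    simp only [mulVec, dotProduct, ← Finset.sum_mul] at this
    exact mul_right_cancel₀ hc this
  have hcol : ∀ i, i ≠ v → distMatrix G i v = μ₁ - μ₂ := fun i hi => by
    have := h₂.mulVec_apply hA hi
    have hsingle : (distMatrix G *ᵥ Pi.single v c) i = distMatrix G i v * c := by
      simp [mulVec, dotProduct_single]
    simp only [mulVec_sub, Pi.sub_apply, Pi.single_apply, if_neg hi, sub_zero, hsingle,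
      h₁.mulVec_apply hA (Set.mem_univ i)] at this
    linarith [mul_right_cancel₀ hc (show (μ₁ - distMatrix G i v) * c = μ₂ * c by linarith)]
  have : Nontrivial (Fin n) := Fin.nontrivial_iff_two_le.2 hn
  obtain ⟨u, hu⟩ := hG.preconnected.exists_adj_of_nontrivial v
  have hdiff : μ₁ - μ₂ = 1 := by
    rw [← hcol u hu.ne', distMatrix, dist_comm, dist_eq_one_iff_adj.2 hu, Nat.cast_one]
  have hμ₁ : μ₁ = n - 1 := by linear_combination hμ + ((n : ℝ) - 1) * hdiff
  exact hG.eq_top_of_sum_distMatrix_le fun i => ((hrow i).trans hμ₁).le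

lemma SimpleGraph.Connected.perron_deletion_bound (hG : G.Connected) (hn : 3 ≤ n)
    (h₁ : IsRayleighMaxOn (distMatrix G) Set.univ μ₁ x) (hx : 0 ≤ x) (hxx : x ⬝ᵥ x = 1)
    (hv : ∀ i, x v ≤ x i) (h₂ : IsRayleighMaxOn (distMatrix G) {v}ᶜ μ₂ y) :
    μ₁ * (n - 2) ≤ μ₂ * (n - 1) ∧ (μ₂ * (n - 1) ≤ μ₁ * (n - 2) → G = ⊤) := by
  have hA := distMatrix_isSymm G
  have hμ₁ := hG.sub_one_le_of_isRayleighMaxOn (by omega) h₁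
  have hN : (3 : ℝ) ≤ n := by exact_mod_cast hn
  have hdel : μ₁ * (1 - 2 * x v ^ 2) ≤ μ₂ * (1 - x v ^ 2) := by
    have := h₂.quadForm_le _ (support_sub_single_apply_subset x v)
    rwa [h₁.quadForm_sub_single_apply hA (distMatrix_self v), dotProduct_sub_single_apply_self,
      hxx] at this
  have hnt : n * x v ^ 2 ≤ 1 := by simpa [hxx] using card_mul_sq_le_dotProduct_self hx hv
  have ht : x v ^ 2 < 1 := by nlinarith
  -- `(1 - 2t) / (1 - t)` is decreasing in `t` and `t = x_v² ≤ 1 / n`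
  have hkey : μ₁ * (n - 2) * (1 - x v ^ 2) + μ₁ * (1 - n * x v ^ 2) ≤
      μ₂ * (n - 1) * (1 - x v ^ 2) := by nlinarith
  refine ⟨le_of_mul_le_mul_right ?_ (sub_pos.2 ht), fun hle => ?_⟩
  · nlinarith [mul_nonneg (show 0 ≤ μ₁ by linarith) (sub_nonneg.2 hnt)]
  have hμ : μ₂ * (n - 1) = μ₁ * (n - 2) := by
    refine hle.antisymm (le_of_mul_le_mul_right ?_ (sub_pos.2 ht))
    nlinarith [mul_nonneg (show 0 ≤ μ₁ by linarith) (sub_nonneg.2 hnt)]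
  have hnt' : n * x v ^ 2 = 1 := by
    have : μ₁ * (1 - n * x v ^ 2) ≤ 0 := by nlinarith
    nlinarith
  have hconst := eq_of_card_mul_sq_eq_dotProduct_self hx hv (by simpa [hxx] using hnt')
  have hx'max : IsRayleighMaxOn (distMatrix G) {v}ᶜ μ₂ (x - Pi.single v (x v)) := by
    refine ⟨support_sub_single_apply_subset x v, ?_, h₂.quadForm_le⟩
    rw [h₁.quadForm_sub_single_apply hA (distMatrix_self v), dotProduct_sub_single_apply_self, hxx]
    refine mul_right_cancel₀ (show (n : ℝ) - 1 ≠ 0 by linarith) ?_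
    linear_combination (-(1 - x v ^ 2)) * hμ - μ₁ * hnt'
  exact hG.eq_top_of_isRayleighMaxOn_const (by omega) (by rintro h; simp [h] at hnt') hconst
    h₁ hx'max hμ

theorem SimpleGraph.Connected.distPareto_bound {ρ1 ρ2 : ℝ} (hG : G.Connected) (hn : 3 ≤ n)
    (hρ1 : IsKthLargest (distParetoSet G) 1 ρ1) (hρ2 : IsKthLargest (distParetoSet G) 2 ρ2) :
    (n : ℝ) - 1 ≤ ρ1 ∧ ρ1 * (n - 2) ≤ ρ2 * (n - 1) ∧ (ρ1 * (n - 2) = ρ2 * (n - 1) → G = ⊤) := by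
  have hA := distMatrix_isSymm G
  have hA0 : ∀ i j, 0 ≤ distMatrix G i j := distMatrix_nonneg
  have hfin : (distParetoSet G).Finite := setOf_isParetoEigenvalue_finite _
  have : Nontrivial (Fin n) := Fin.nontrivial_iff_two_le.2 (by omega)
  obtain ⟨μ₁, x, h₁, hx, hxx⟩ := exists_isRayleighMaxOn hA0 Set.univ_nonempty
  have hρ1μ : ρ1 = μ₁ := le_antisymm (h₁.le_of_isParetoEigenvalue hρ1.1)
    (hρ1.le_of_one hfin ⟨x, h₁.isParetoEigenpair hA hA0 hx (by rintro rfl; simp at hxx)⟩)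
  obtain ⟨v, -, hv⟩ := Finset.univ.exists_min_image x Finset.univ_nonempty
  obtain ⟨w, hw⟩ := exists_ne v
  obtain ⟨μ₂, y, h₂, hy, hyy⟩ :=
    exists_isRayleighMaxOn hA0 (⟨w, hw⟩ : ({v}ᶜ : Set (Fin n)).Nonempty)
  have hy0 : y ≠ 0 := by rintro rfl; simp at hyy
  have hμ₂ : μ₂ ≤ ρ2 := hρ1.le_of_two hfin hρ2 ⟨y, h₂.isParetoEigenpair hA hA0 hy hy0⟩ <|
    hρ1μ ▸ (h₁.lt_of_compl_singleton hA hA0 (fun j hj => hG.distMatrix_pos hj.symm) h₂ hy hy0).ne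
  obtain ⟨hle, heq⟩ := hG.perron_deletion_bound hn h₁ hx hxx (fun i => hv i (Finset.mem_univ i)) h₂
  have hN : (3 : ℝ) ≤ n := by exact_mod_cast hn
  rw [hρ1μ]
  refine ⟨hG.sub_one_le_of_isRayleighMaxOn (by omega) h₁, by nlinarith, fun h => heq ?_⟩
  nlinarith

end ConnectedGraph

theorem stmt10 (n : ℕ) (hn : 3 ≤ n) (G : SimpleGraph (Fin n)) (hG : G.Connected)
    (ρ1 ρ2 : ℝ)
    (hρ1 : IsKthLargest (distParetoSet G) 1 ρ1)
    (hρ2 : IsKthLargest (distParetoSet G) 2 ρ2) :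
    ρ1 / ρ2 ≤ ((n : ℝ) - 1) / ((n : ℝ) - 2) ∧
    (ρ1 / ρ2 = ((n : ℝ) - 1) / ((n : ℝ) - 2) ↔ G = ⊤) := by
  obtain ⟨hρ1_ge, hle, heq⟩ := hG.distPareto_bound hn hρ1 hρ2
  have hN : (3 : ℝ) ≤ n := by exact_mod_cast hn
  have hρ2_pos : 0 < ρ2 := by nlinarith
  rw [div_le_div_iff₀ hρ2_pos (by linarith), div_eq_div_iff hρ2_pos.ne' (by linarith)]
  refine ⟨by linarith, fun h => heq (by linarith), ?_⟩
  rintro rfl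
  obtain ⟨hρ1_le, hρ2_le⟩ := isKthLargest_distParetoSet_top_le hρ1 hρ2
  obtain rfl : ρ1 = n - 1 := le_antisymm hρ1_le hρ1_ge
  obtain rfl : ρ2 = n - 2 := hρ2_le.antisymm <|
    le_of_mul_le_mul_right (by linarith : ((n : ℝ) - 2) * (n - 1) ≤ ρ2 * (n - 1)) (by linarith)
  ring
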